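/- In the formal power series ring ℚ[[x,y]], the element A(x)·B(y) + B(x)·A(y) + 2 is divisible by x + y, where A(T) = Σ_{n≥0} (6n)!/((3n)!(2n)!) T^n and B(T) = Σ_{n≥0} ((6n+1)/(6n-1)) * (6n)!/((3n)!(2n)!) * T^n. -/

import Mathlib

/-- `a n = (6n)! / ((3n)! (2n)!)`, as a rational number. -/
noncomputable def pixtonA (n : ℕ) : ℚ :=
  (Nat.factorial (6 * n) : ℚ) / ((Nat.factorial (3 * n) : ℚ) * (Nat.factorial (2 * n) : ℚ))

/-- `b n = ((6n+1)/(6n-1)) * a n`. -/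
noncomputable def pixtonB (n : ℕ) : ℚ :=
  ((6 * (n : ℚ) + 1) / (6 * (n : ℚ) - 1)) * pixtonA n

/-- The two-variable power series `A(x)·B(y) + B(x)·A(y)`, where the coefficient of
`x^i y^j` is `a i * b j + b i * a j`. -/
noncomputable def twoVarAB : MvPowerSeries (Fin 2) ℚ :=
  fun d => pixtonA (d 0) * pixtonB (d 1) + pixtonB (d 0) * pixtonA (d 1)

/-!
A series `f` in `x, y` is divisible by `x + y` as soon as `f(x, -x) = 0`, i.e. every alternating
antidiagonal sum `∑ₖ (-1)ᵏ f_{k, n-k}` vanishes: the coefficients of the quotient are then found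
by solving `f_{i,j} = q_{i-1,j} + q_{i,j-1}` along each antidiagonal, and the last equation is the
vanishing of the alternating sum.

Write `a n = (6n - 1) c n` and `b n = (6n + 1) c n`, so that `(n + 1) c (n + 1) = 12 (36 n² - 1) c n`.
The coefficient of `xⁱ yʲ` in `A(x) B(y) + B(x) A(y)` is `2 (36 i j - 1) c i c j`, and for `n ≥ 1`
its alternating antidiagonal sums telescope against a WZ-type certificate. For `n = 0` the sum is
`2 a 0 b 0 = -2`, which the added constant `2` cancels.
-/

open Finset

namespace MvPowerSeries

open Finsupp

section Semiring

variable {σ R : Type*} [Semiring R]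

theorem coeff_single_add_X_mul (s : σ) (m : σ →₀ ℕ) (φ : MvPowerSeries σ R) :
    coeff (single s 1 + m) (X s * φ) = coeff m φ := by
  rw [X, coeff_add_monomial_mul, one_mul]

theorem coeff_X_mul_of_eq_zero {s : σ} {m : σ →₀ ℕ} (hm : m s = 0) (φ : MvPowerSeries σ R) :
    coeff m (X s * φ) = 0 :=
  X_dvd_iff.mp (dvd_mul_right _ _) m hm

theorem coeff_ofNat [DecidableEq σ] (m : σ →₀ ℕ) (n : ℕ) [n.AtLeastTwo] :
    coeff m (ofNat(n) : MvPowerSeries σ R) = if m = 0 then ofNat(n) else 0 := by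
  rw [← map_ofNat C n, coeff_C]

end Semiring

section CommRing

variable {R : Type*} [CommRing R]

/-- If `c i j` are the coefficients of `f`, then `quotByXAddY c i j` are those of
`f / (X 0 + X 1)`, provided the alternating antidiagonal sums of `c` vanish. -/
def quotByXAddY (c : ℕ → ℕ → R) : ℕ → ℕ → R
  | 0, j => c 0 (j + 1)
  | i + 1, j => c (i + 1) (j + 1) - quotByXAddY c i (j + 1)

theorem neg_one_pow_mul_quotByXAddY (c : ℕ → ℕ → R) (i j : ℕ) :
    (-1) ^ i * quotByXAddY c i j = ∑ k ∈ range (i + 1), (-1) ^ k * c k (i + j + 1 - k) := by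
  induction i generalizing j with
  | zero => simp [quotByXAddY]
  | succ i ih =>
    rw [sum_range_succ, show i + 1 + j + 1 = i + (j + 1) + 1 by ring, ← ih, quotByXAddY,
      show i + (j + 1) + 1 - (i + 1) = j + 1 by omega]
    ring

theorem quotByXAddY_zero_right {c : ℕ → ℕ → R} {i : ℕ}
    (h : ∑ k ∈ range (i + 2), (-1) ^ k * c k (i + 1 - k) = 0) :
    quotByXAddY c i 0 = c (i + 1) 0 := by
  rw [sum_range_succ, Nat.sub_self] at h
  apply ((isUnit_neg_one (α := R)).pow i).mul_left_cancel
  rw [neg_one_pow_mul_quotByXAddY]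
  linear_combination h

theorem X_zero_add_X_one_dvd {f : MvPowerSeries (Fin 2) R}
    (h : ∀ n, ∑ k ∈ range (n + 1), (-1) ^ k * coeff (single 0 k + single 1 (n - k)) f = 0) :
    X 0 + X 1 ∣ f := by
  set c : ℕ → ℕ → R := fun i j => coeff (single 0 i + single 1 j) f
  set q : MvPowerSeries (Fin 2) R := fun d => quotByXAddY c (d 0) (d 1)
  have coeff_q (i j : ℕ) : coeff (single 0 i + single 1 j) q = quotByXAddY c i j := by
    change quotByXAddY c _ _ = _
    simp
  have coeff_X_zero_mul (i j : ℕ) :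
      coeff (single 0 (i + 1) + single 1 j) (X 0 * q) = quotByXAddY c i j := by
    rw [single_add, add_comm (single 0 i), add_assoc, coeff_single_add_X_mul, coeff_q]
  have coeff_X_one_mul (i j : ℕ) :
      coeff (single 0 i + single 1 (j + 1)) (X 1 * q) = quotByXAddY c i j := by
    rw [single_add, add_comm (single 1 j), add_left_comm, coeff_single_add_X_mul, coeff_q]
  refine ⟨q, ext fun d => ?_⟩
  obtain ⟨i, j, rfl⟩ : ∃ i j, d = single 0 i + single 1 j :=
    ⟨d 0, d 1, by rw [← Fin.sum_univ_two (fun a => single a (d a)), Finsupp.univ_sum_single]⟩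
  rw [add_mul, map_add]
  rcases i with _ | i <;> rcases j with _ | j
  · simpa using h 0
  · rw [coeff_X_mul_of_eq_zero (by simp), coeff_X_one_mul, zero_add]
    rfl
  · rw [coeff_X_zero_mul, coeff_X_mul_of_eq_zero (by simp), add_zero]
    exact (quotByXAddY_zero_right (c := c) (h (i + 1))).symm
  · rw [coeff_X_zero_mul, coeff_X_one_mul]
    exact (add_sub_cancel _ _).symm

end CommRing

end MvPowerSeries

theorem pixtonA_zero : pixtonA 0 = 1 := by simp [pixtonA]

theorem pixtonA_succ (n : ℕ) :
    pixtonA (n + 1) = 12 * (6 * n + 1) * (6 * n + 5) / (n + 1) * pixtonA n := by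
  simp only [pixtonA, show 6 * (n + 1) = 6 * n + 5 + 1 by ring,
    show 3 * (n + 1) = 3 * n + 2 + 1 by ring, show 2 * (n + 1) = 2 * n + 1 + 1 by ring,
    Nat.factorial_succ]
  push_cast
  field_simp
  ring

theorem six_mul_sub_one_ne_zero (k : ℕ) : 6 * (k : ℚ) - 1 ≠ 0 := by
  intro h
  have : 6 * k = 1 := by exact_mod_cast (by linarith : (6 * k : ℚ) = 1)
  omega

noncomputable def pixtonC (n : ℕ) : ℚ := pixtonA n / (6 * n - 1)

theorem pixtonC_zero : pixtonC 0 = -1 := by simp [pixtonC, pixtonA_zero]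

theorem pixtonC_succ (n : ℕ) :
    pixtonC (n + 1) = 12 * (6 * n + 1) * (6 * n - 1) / (n + 1) * pixtonC n := by
  have := six_mul_sub_one_ne_zero n
  have : (6 * n + 5 : ℚ) ≠ 0 := by positivity
  rw [pixtonC, pixtonC, pixtonA_succ,
    show 6 * ((n + 1 : ℕ) : ℚ) - 1 = 6 * n + 5 by push_cast; ring]
  field_simp

theorem pixtonA_mul_pixtonB_add_pixtonB_mul_pixtonA (i j : ℕ) :
    pixtonA i * pixtonB j + pixtonB i * pixtonA j =
      2 * (36 * i * j - 1) * pixtonC i * pixtonC j := by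
  have := six_mul_sub_one_ne_zero i
  have := six_mul_sub_one_ne_zero j
  simp only [pixtonB, pixtonC]
  field_simp
  ring

noncomputable def pixtonCert (n k : ℕ) : ℚ :=
  2 * (-1) ^ k * k * (36 * ((n - k : ℕ) : ℚ) ^ 2 - 1) * pixtonC k * pixtonC (n - k)

theorem pixtonCert_sub_pixtonCert_succ {n k : ℕ} (hk : k < n) :
    pixtonCert n k - pixtonCert n (k + 1) =
      n * ((-1) ^ k * (2 * (36 * k * (n - k : ℕ) - 1) * pixtonC k * pixtonC (n - k))) := by
  obtain ⟨m, rfl⟩ : ∃ m, n = k + m + 1 := ⟨n - k - 1, by omega⟩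
  simp only [pixtonCert, show k + m + 1 - k = m + 1 by omega,
    show k + m + 1 - (k + 1) = m by omega, pixtonC_succ]
  push_cast
  field_simp
  ring

theorem sum_range_neg_one_pow_mul_pixton_eq_zero {n : ℕ} (hn : n ≠ 0) :
    ∑ k ∈ range (n + 1), (-1) ^ k * (pixtonA k * pixtonB (n - k) + pixtonB k * pixtonA (n - k))
      = 0 := by
  simp only [pixtonA_mul_pixtonB_add_pixtonB_mul_pixtonA]
  apply mul_left_cancel₀ (Nat.cast_ne_zero.mpr hn : (n : ℚ) ≠ 0)
  rw [mul_zero, mul_sum, sum_range_succ,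
    sum_congr rfl fun k hk => (pixtonCert_sub_pixtonCert_succ (mem_range.mp hk)).symm,
    sum_range_sub']
  simp [pixtonCert, pixtonC_zero]
  ring

theorem coeff_twoVarAB (i j : ℕ) :
    MvPowerSeries.coeff (Finsupp.single 0 i + Finsupp.single 1 j) twoVarAB =
      pixtonA i * pixtonB j + pixtonB i * pixtonA j := by
  simp [twoVarAB, MvPowerSeries.coeff_apply]

theorem x_add_y_dvd_twoVarAB_add_two :
    (MvPowerSeries.X 0 + MvPowerSeries.X 1 : MvPowerSeries (Fin 2) ℚ) ∣ (twoVarAB + 2) := by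
  refine MvPowerSeries.X_zero_add_X_one_dvd fun n => ?_
  rcases eq_or_ne n 0 with rfl | hn
  · rw [sum_range_one, map_add, coeff_twoVarAB, MvPowerSeries.coeff_ofNat, if_pos (by simp),
      pixtonA_mul_pixtonB_add_pixtonB_mul_pixtonA, pixtonC_zero]
    norm_num
  · rw [← sum_range_neg_one_pow_mul_pixton_eq_zero hn]
    refine sum_congr rfl fun k _ => ?_
    rw [map_add, coeff_twoVarAB, MvPowerSeries.coeff_ofNat, if_neg, add_zero]
    simp only [add_eq_zero, Finsupp.single_eq_zero]
    omega
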